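/- Set π_{n,k} := 2(n+1)/((n−1)(k+1)(k+2)), A(n,k) := 4(n+1)(n−k−1)/((n−1)(n−2)(k+1)(k+2)(k+3)) and B(n,k) := 16(n+1)(n−k−1)(n−k−2)/((n−1)(n−2)(n−3)(k+1)(k+2)(k+3)(k+4)). Then for all integers n ≥ 4 and 1 ≤ k ≤ n−1: C(n,2)^{−1}·π_{n,k} + 2(n−2)·C(n,2)^{−1}·A(n,k) + C(n−2,2)·C(n,2)^{−1}·B(n,k) − π_{n,k}² = 4(n+1)(n−k−1)·(n(3k²+5k−4) − (k³+k²+2k+8)) / (n(n−1)²(k+1)²(k+2)²(k+3)(k+4)). Moreover, for each fixed integer k ≥ 1, this quantity converges, as n → ∞, to 4(3k²+5k−4)/((k+1)²(k+2)²(k+3)(k+4)). -/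

import Mathlib

open Filter Topology

/-- `π_{n,k}`: probability that a random pair of tips coalesced at the `k`-th speciation
event of a Yule tree with `n` tips. -/
noncomputable def piProb (n k : ℝ) : ℝ := 2 * (n + 1) / ((n - 1) * (k + 1) * (k + 2))

/-- Case (ii) probability: two pairs sharing one tip both coalesce at event `k`. -/
noncomputable def caseII (n k : ℝ) : ℝ :=
  4 * (n + 1) * (n - k - 1) / ((n - 1) * (n - 2) * (k + 1) * (k + 2) * (k + 3))

/-- Case (iii) probability: two disjoint pairs both coalesce at event `k`. -/
noncomputable def caseIII (n k : ℝ) : ℝ :=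
  16 * (n + 1) * (n - k - 1) * (n - k - 2) /
    ((n - 1) * (n - 2) * (n - 3) * (k + 1) * (k + 2) * (k + 3) * (k + 4))

/-- `Var(E[1_k^{(n)} | 𝒴_n])` in closed form. -/
noncomputable def varCond1k (n k : ℝ) : ℝ :=
  4 * (n + 1) * (n - k - 1) * (n * (3 * k ^ 2 + 5 * k - 4) - (k ^ 3 + k ^ 2 + 2 * k + 8)) /
    (n * (n - 1) ^ 2 * (k + 1) ^ 2 * (k + 2) ^ 2 * (k + 3) * (k + 4))

theorem pair_decomposition_sub_sq_eq_varCond1k {n k : ℝ} (hn₀ : n ≠ 0) (hn₂ : n - 2 ≠ 0)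
    (hn₃ : n - 3 ≠ 0) (hk₃ : k + 3 ≠ 0) (hk₄ : k + 4 ≠ 0) :
    (n * (n - 1) / 2)⁻¹ * piProb n k + 2 * (n - 2) * (n * (n - 1) / 2)⁻¹ * caseII n k
      + ((n - 2) * (n - 3) / 2) * (n * (n - 1) / 2)⁻¹ * caseIII n k - piProb n k ^ 2
      = varCond1k n k := by
  unfold piProb caseII caseIII varCond1k
  field_simp
  ring

theorem varCond1k_eq_in_terms_of_inv {n : ℝ} (hn : n ≠ 0) (k : ℝ) :
    varCond1k n k =
      4 * (1 + n⁻¹) * (1 - (k + 1) * n⁻¹)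
          * (3 * k ^ 2 + 5 * k - 4 - (k ^ 3 + k ^ 2 + 2 * k + 8) * n⁻¹)
        / ((1 - n⁻¹) ^ 2 * ((k + 1) ^ 2 * (k + 2) ^ 2 * (k + 3) * (k + 4))) := by
  unfold varCond1k
  field_simp
  ring

theorem tendsto_varCond1k_atTop {k : ℝ} (hk₁ : k + 1 ≠ 0) (hk₂ : k + 2 ≠ 0) (hk₃ : k + 3 ≠ 0)
    (hk₄ : k + 4 ≠ 0) :
    Tendsto (fun n : ℝ => varCond1k n k) atTop
      (𝓝 (4 * (3 * k ^ 2 + 5 * k - 4) / ((k + 1) ^ 2 * (k + 2) ^ 2 * (k + 3) * (k + 4)))) := by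
  have hK : (k + 1) ^ 2 * (k + 2) ^ 2 * (k + 3) * (k + 4) ≠ 0 := by positivity
  have hcont : ContinuousAt (fun x : ℝ =>
      4 * (1 + x) * (1 - (k + 1) * x) * (3 * k ^ 2 + 5 * k - 4 - (k ^ 3 + k ^ 2 + 2 * k + 8) * x)
        / ((1 - x) ^ 2 * ((k + 1) ^ 2 * (k + 2) ^ 2 * (k + 3) * (k + 4)))) 0 :=
    ContinuousAt.div (by fun_prop) (by fun_prop) (by simpa using hK)
  have hlim := hcont.tendsto.comp tendsto_inv_atTop_zero
  simp only [Function.comp_def, add_zero, mul_zero, sub_zero, one_pow, one_mul, mul_one] at hlim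
  refine hlim.congr' ?_
  filter_upwards [eventually_ne_atTop 0] with n hn
  exact (varCond1k_eq_in_terms_of_inv hn k).symm

theorem stmt3 :
    (∀ n k : ℕ, 4 ≤ n → 1 ≤ k → k ≤ n - 1 →
      ((n : ℝ) * ((n : ℝ) - 1) / 2)⁻¹ * piProb n k
        + 2 * ((n : ℝ) - 2) * ((n : ℝ) * ((n : ℝ) - 1) / 2)⁻¹ * caseII n k
        + (((n : ℝ) - 2) * ((n : ℝ) - 3) / 2) * ((n : ℝ) * ((n : ℝ) - 1) / 2)⁻¹ * caseIII n k
        - (piProb n k) ^ 2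
      = varCond1k n k) ∧
    (∀ k : ℕ, 1 ≤ k →
      Tendsto (fun n : ℕ => varCond1k n k) atTop
        (nhds (4 * (3 * (k : ℝ) ^ 2 + 5 * k - 4) /
          (((k : ℝ) + 1) ^ 2 * ((k : ℝ) + 2) ^ 2 * ((k : ℝ) + 3) * ((k : ℝ) + 4))))) := by
  refine ⟨fun n k hn _ _ => ?_, fun k _ => ?_⟩
  · have hn' : (4 : ℝ) ≤ n := by exact_mod_cast hn
    exact pair_decomposition_sub_sq_eq_varCond1k (by linarith) (by linarith) (by linarith)
      (by positivity) (by positivity)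
  · exact (tendsto_varCond1k_atTop (by positivity) (by positivity) (by positivity)
      (by positivity)).comp tendsto_natCast_atTop_atTop
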